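/- arXiv:0909.4565 — 10 statements merged into one kernel-verified Lean document; each statement's English description precedes it below -/
import Mathlib

section
/- If τ : L → L is an injective, continuous, open group homomorphism of a topological group L, and L has only finitely many connected components, then τ is surjective (hence a bijective group homomorphism). -/
/-!
The range of `τ` is an open subgroup, hence clopen. Since `τ` is injective and open, its inverse
on that clopen range is continuous, so `τ x` and `τ y` lie in a common component only if `x` and
`y` do. Sending each component `C` to the component of `τ c`, for a chosen `c ∈ C`, is therefore
an injective, hence surjective, self-map of the finite set of components: every component meets
the range of `τ`, and the range, being clopen, contains it.
-/

open Set Function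

section

variable {X Y : Type*} [TopologicalSpace X] [TopologicalSpace Y]

theorem IsOpenMap.connectedComponents_mk_eq_of_apply {f : X → Y} (hf : IsOpenMap f)
    (hinj : Injective f) (hrange : IsClopen (range f)) {x y : X}
    (h : ConnectedComponents.mk (f x) = ConnectedComponents.mk (f y)) :
    ConnectedComponents.mk x = ConnectedComponents.mk y := by
  rw [ConnectedComponents.coe_eq_coe'] at h ⊢
  have hpre : IsPreconnected (f ⁻¹' connectedComponent (f y)) :=
    isPreconnected_connectedComponent.preimage_of_isOpenMap hinj hf
      (hrange.connectedComponent_subset (mem_range_self y))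
  exact hpre.subset_connectedComponent (mem_connectedComponent (x := f y)) h

theorem IsOpenMap.surjective_of_isClopen_range [Finite (ConnectedComponents X)] {f : X → X}
    (hf : IsOpenMap f) (hinj : Injective f) (hrange : IsClopen (range f)) : Surjective f := by
  let F : ConnectedComponents X → ConnectedComponents X :=
    fun c => ConnectedComponents.mk (f (Quotient.out c))
  have hF : Injective F := fun c d h =>
    (Quotient.out_eq c).symm.trans
      ((hf.connectedComponents_mk_eq_of_apply hinj hrange h).trans (Quotient.out_eq d))
  intro y
  obtain ⟨c, hc⟩ := Finite.surjective_of_injective hF (ConnectedComponents.mk y)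
  have hy : y ∈ connectedComponent (f (Quotient.out c)) :=
    ConnectedComponents.coe_eq_coe'.mp hc.symm
  exact hrange.connectedComponent_subset (mem_range_self _) hy

end

theorem MonoidHom.isClopen_range_of_isOpenMap {G H : Type*} [Group G] [Group H]
    [TopologicalSpace G] [TopologicalSpace H] [SeparatelyContinuousMul H] {f : G →* H}
    (hf : IsOpenMap f) :
    IsClopen (Set.range f) :=
  have hopen : IsOpen (f.range : Set H) := by simpa using hf.isOpen_range
  ⟨by simpa using f.range.isClosed_of_isOpen hopen, hf.isOpen_range⟩

theorem near_automorphism_of_finitely_many_components_is_automorphism_general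
    {L : Type*} [TopologicalSpace L] [Group L] [IsTopologicalGroup L]
    [Finite (ConnectedComponents L)]
    (τ : L →* L) (hinj : Function.Injective τ)
    (hopen : IsOpenMap τ) :
    Function.Surjective τ ∧ Function.Bijective τ := by
  have hsurj : Function.Surjective τ :=
    hopen.surjective_of_isClopen_range hinj (τ.isClopen_range_of_isOpenMap hopen)
  exact ⟨hsurj, hinj, hsurj⟩

/-- If τ : L → L is an injective, continuous, open group homomorphism of a
topological group L with finitely many connected components, then τ is
surjective, hence bijective. -/
theorem near_automorphism_of_finitely_many_components_is_automorphism
    {L : Type*} [TopologicalSpace L] [Group L] [IsTopologicalGroup L] [T2Space L]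
    [Finite (ConnectedComponents L)]
    (τ : L →* L) (hcont : Continuous τ) (hinj : Function.Injective τ)
    (hopen : IsOpenMap τ) :
    Function.Surjective τ ∧ Function.Bijective τ :=
  near_automorphism_of_finitely_many_components_is_automorphism_general τ hinj hopen
end

section
/- A nontrivial compact (Hausdorff) topological group does not admit a contractive automorphism, i.e., there is no topological group automorphism φ of G with φⁿ(x) → 1 for all x ∈ G. -/
/-!
A topological automorphism of a compact group preserves its Haar measure `μ`, the modulus of any
such automorphism being `1`. If `φ` contracts every point into an open neighbourhood `U` of `1`,
the sets of points whose orbits stay in `U` from time `n` on exhaust `G`, and the `n`-th one lies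
in `φ⁻ⁿ(U)`, of measure `μ U`; so `U` has full measure. But when `G` is nontrivial and Hausdorff,
`U` can be chosen to miss a nonempty open set, and such a set has positive Haar measure.
-/

open MeasureTheory Measure Filter Set

theorem MeasureTheory.MeasurePreserving.measure_eq_measure_univ_of_forall_eventually_iterate_mem
    {α : Type*} [MeasurableSpace α] {μ : Measure α} {f : α → α} (hf : MeasurePreserving f μ μ)
    {U : Set α} (hU : NullMeasurableSet U μ) (h : ∀ x, ∀ᶠ n in atTop, f^[n] x ∈ U) :
    μ U = μ univ := by
  set B : ℕ → Set α := fun n ↦ {x | ∀ m ≥ n, f^[m] x ∈ U}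
  have hB_mono : Monotone B := fun n k hnk x hx m hm ↦ hx m (hnk.trans hm)
  have hB_cover : ⋃ n, B n = univ :=
    eq_univ_of_forall fun x ↦ mem_iUnion.2 (eventually_atTop.1 (h x))
  refine le_antisymm (measure_mono (subset_univ U)) ?_
  calc μ univ = ⨆ n, μ (B n) := by rw [← hB_cover, hB_mono.measure_iUnion]
    _ ≤ μ U := iSup_le fun n ↦
        calc μ (B n) ≤ μ (f^[n] ⁻¹' U) := measure_mono fun _ hx ↦ hx n le_rfl
          _ = μ U := (hf.iterate n).measure_preimage hU

theorem ContinuousMulEquiv.measurePreserving_of_compactSpace {G : Type*} [Group G]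
    [TopologicalSpace G] [MeasurableSpace G] [BorelSpace G] [IsTopologicalGroup G]
    [CompactSpace G] (μ : Measure G) [IsHaarMeasure μ] (φ : G ≃ₜ* G) :
    MeasurePreserving φ μ μ := by
  refine ⟨(map_continuous φ).measurable, ?_⟩
  have := φ.isHaarMeasure_map μ
  have hmap : μ.map φ = haarScalarFactor (μ.map φ) μ • μ :=
    isMulInvariant_eq_smul_of_compactSpace _ _
  have huniv : haarScalarFactor (μ.map φ) μ * μ univ = μ univ := by
    simpa [map_apply (map_continuous φ).measurable .univ, eq_comm] using congr($hmap univ)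
  have hc : haarScalarFactor (μ.map φ) μ = 1 := by
    exact_mod_cast (ENNReal.mul_eq_right (NeZero.ne (μ univ)) (measure_ne_top μ univ)).1 huniv
  rw [hmap, hc, one_smul]

/-- A nontrivial compact Hausdorff topological group admits no contractive
automorphism: there is no homeomorphic group automorphism φ with φⁿ(x) → 1
for all x. -/
theorem no_contractive_automorphism_of_compact
    {G : Type*} [TopologicalSpace G] [Group G] [IsTopologicalGroup G]
    [CompactSpace G] [T2Space G] [Nontrivial G] :
    ¬ ∃ φ : G ≃* G, Continuous φ ∧ Continuous φ.symm ∧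
        ∀ x : G, Filter.Tendsto (fun n => (⇑φ)^[n] x) Filter.atTop (nhds (1 : G)) := by
  rintro ⟨φ, hφ, hφ_symm, hφ_contr⟩
  borelize G
  let ψ : G ≃ₜ* G := { φ with continuous_toFun := hφ, continuous_invFun := hφ_symm }
  have hψ : MeasurePreserving ψ haar haar := ψ.measurePreserving_of_compactSpace haar
  obtain ⟨x, hx⟩ := exists_ne (1 : G)
  obtain ⟨U, V, hU, hV, h1U, hxV, hUV⟩ := t2_separation hx.symm
  have hU_full : haar U = haar univ :=
    hψ.measure_eq_measure_univ_of_forall_eventually_iterate_mem hU.measurableSet.nullMeasurableSet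
      fun y ↦ hφ_contr y (hU.mem_nhds h1U)
  have hV_null : haar V = 0 := by
    refine measure_mono_null hUV.subset_compl_left ?_
    rw [measure_compl hU.measurableSet (measure_ne_top _ _), hU_full, tsub_self]
  exact (hV.measure_pos haar ⟨x, hxV⟩).ne' hV_null
end

section
/- If φ : G → G is a contractive automorphism of a topological group G (i.e., φⁿ(x) → 1 for all x), then for every neighborhood X of the identity and every compact set V ⊆ G there exists N such that φⁿ(V) ⊆ X for all n ≥ N. -/
/-!
Baire's theorem, applied to the closed sets `Aₙ = {x | φᵐ x ∈ K for all m ≥ n}` covering `G`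
(with `K` a closed neighbourhood of `1` such that `K / K ⊆ X`), yields a point `p` and a
neighbourhood `U` of `1` with `U p ⊆ A_{n₀}`. Since `φᵐ x = φᵐ (x p) / φᵐ p`, every `φᵐ` with
`m ≥ n₀` maps `U` into `X`. A compact `V` is covered by finitely many of the open sets
`φ⁻ᵏ(U)`, and a point of `V` that has entered `U` stays in `X` from then on.
-/

open Filter Set Function Topology

theorem eventually_mapsTo_iterate_of_isCompact {α : Type*} [TopologicalSpace α] {f : α → α}
    (hf : Continuous f) {U V X : Set α} (hU : IsOpen U) (hUX : ∀ᶠ n in atTop, MapsTo f^[n] U X)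
    (hV : IsCompact V) (hVU : ∀ x ∈ V, ∃ k, f^[k] x ∈ U) :
    ∀ᶠ n in atTop, MapsTo f^[n] V X := by
  refine hV.induction_on (.of_forall fun _ => mapsTo_empty _ _)
    (fun s t hst ht => ht.mono fun n hn => hn.mono_left hst)
    (fun s t hs ht => (hs.and ht).mono fun n hn => hn.1.union hn.2) fun x hx => ?_
  obtain ⟨k, hk⟩ := hVU x hx
  refine ⟨f^[k] ⁻¹' U, mem_nhdsWithin_of_mem_nhds ((hU.preimage (hf.iterate k)).mem_nhds hk), ?_⟩
  filter_upwards [(tendsto_sub_atTop_nat k).eventually hUX, eventually_ge_atTop k]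
    with n hn hkn y hy
  rw [show n = n - k + k by omega, iterate_add_apply]
  exact hn hy

theorem exists_isOpen_one_mem_eventually_mapsTo_iterate {G F : Type*} [TopologicalSpace G]
    [Group G] [IsTopologicalGroup G] [BaireSpace G] [FunLike F G G] [MonoidHomClass F G G]
    {f : F} (hf : Continuous f) (hcontr : ∀ x : G, Tendsto (fun n => f^[n] x) atTop (𝓝 1))
    {X : Set G} (hX : X ∈ 𝓝 1) :
    ∃ U : Set G, IsOpen U ∧ (1 : G) ∈ U ∧ ∀ᶠ n in atTop, MapsTo f^[n] U X := by
  obtain ⟨Z, hZ, hZX⟩ := exists_nhds_split_inv hX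
  obtain ⟨K, hK, hKc, hKZ⟩ := exists_mem_nhds_isClosed_subset hZ
  set A : ℕ → Set G := fun n => ⋂ m ≥ n, f^[m] ⁻¹' K
  have hA_closed (n : ℕ) : IsClosed (A n) :=
    isClosed_biInter fun m _ => hKc.preimage (hf.iterate m)
  have hA_cover : ⋃ n, A n = univ := eq_univ_of_forall fun x =>
    mem_iUnion.2 <| (eventually_atTop.1 ((hcontr x).eventually_mem hK)).imp
      fun _ hn => mem_iInter₂.2 hn
  obtain ⟨n₀, p, hp⟩ := nonempty_interior_of_iUnion_of_closed hA_closed hA_cover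
  refine ⟨(· * p) ⁻¹' interior (A n₀), isOpen_interior.preimage (continuous_mul_const p),
    by simpa using hp, eventually_atTop.2 ⟨n₀, fun m hm x hx => ?_⟩⟩
  have hxp : f^[m] (x * p) ∈ K := mem_iInter₂.1 (interior_subset hx) m hm
  have hp' : f^[m] p ∈ K := mem_iInter₂.1 (interior_subset hp) m hm
  rw [← mul_div_cancel_right x p, iterate_map_div]
  exact hZX _ (hKZ hxp) _ (hKZ hp')

theorem contractive_automorphism_uniform_on_compacts_general
    {G : Type*} [TopologicalSpace G] [Group G] [IsTopologicalGroup G]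
    [LocallyCompactSpace G] [T2Space G]
    (φ : G ≃* G) (hcont : Continuous φ)
    (hcontr : ∀ x : G, Filter.Tendsto (fun n => (⇑φ)^[n] x) Filter.atTop (nhds (1 : G))) :
    ∀ X ∈ nhds (1 : G), ∀ V : Set G, IsCompact V →
      ∃ N : ℕ, ∀ n ≥ N, (⇑φ)^[n] '' V ⊆ X := by
  intro X hX V hV
  obtain ⟨U, hU, hU1, hUX⟩ := exists_isOpen_one_mem_eventually_mapsTo_iterate hcont hcontr hX
  have hVU : ∀ x ∈ V, ∃ k, φ^[k] x ∈ U := fun x _ =>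
    ((hcontr x).eventually_mem (hU.mem_nhds hU1)).exists
  obtain ⟨N, hN⟩ := eventually_atTop.1 (eventually_mapsTo_iterate_of_isCompact hcont hU hUX hV hVU)
  exact ⟨N, fun n hn => (hN n hn).image_subset⟩

/-- If φ is a contractive automorphism of a locally compact Hausdorff
topological group G, then for every neighborhood X of 1 and every compact
V ⊆ G there is N with φⁿ(V) ⊆ X for all n ≥ N. -/
theorem contractive_automorphism_uniform_on_compacts
    {G : Type*} [TopologicalSpace G] [Group G] [IsTopologicalGroup G]
    [LocallyCompactSpace G] [T2Space G]
    (φ : G ≃* G) (hcont : Continuous φ) (hcont' : Continuous φ.symm)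
    (hcontr : ∀ x : G, Filter.Tendsto (fun n => (⇑φ)^[n] x) Filter.atTop (nhds (1 : G))) :
    ∀ X ∈ nhds (1 : G), ∀ V : Set G, IsCompact V →
      ∃ N : ℕ, ∀ n ≥ N, (⇑φ)^[n] '' V ⊆ X :=
  contractive_automorphism_uniform_on_compacts_general φ hcont hcontr
end

section
/- Let G be a locally compact Hausdorff topological group with a contractive automorphism φ. Then there exists a compact neighborhood U of the identity with φ(U) ⊆ U and ⋂ₙ φⁿ(U) = {1}, and the family (φⁿ(U))ₙ is a neighborhood base at the identity. -/
/-!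
Given a closed neighbourhood `V` of `1`, the closed sets `{x | φᴺ⁺ᵐ x ∈ V for all m}` cover `G`,
so by Baire category one of them has interior; translating, and using `V / V ⊆ W`, some
neighbourhood of `1` has its whole forward orbit in any prescribed neighbourhood `W` of `1`.
Taking `W` compact, the set `U` of points whose forward orbit stays in `W` is a compact,
forward-invariant neighbourhood of `1`. The same fact, combined with a finite subcover, upgrades
pointwise contraction to uniform contraction on compact sets, so the images `φⁿ(U)`, which are
neighbourhoods of `1` because `φ` is open, shrink to `1`.
-/

open Filter Set Function Topology

theorem IsOpenMap.iterate {X : Type*} [TopologicalSpace X] {g : X → X} (hg : IsOpenMap g) :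
    ∀ n : ℕ, IsOpenMap g^[n]
  | 0 => IsOpenMap.id
  | n + 1 => (hg.iterate n).comp hg

theorem mapsTo_iInter_preimage_iterate {α : Type*} (g : α → α) (V : Set α) :
    MapsTo g (⋂ n : ℕ, g^[n] ⁻¹' V) (⋂ n : ℕ, g^[n] ⁻¹' V) := fun _ hx =>
  mem_iInter.2 fun n => by
    simpa only [mem_preimage, iterate_succ_apply] using mem_iInter.1 hx (n + 1)

section ContractiveEndomorphism

variable {G : Type*} [TopologicalSpace G] [Group G] [IsTopologicalGroup G] [BaireSpace G]
  {F : Type*} [FunLike F G G] [MonoidHomClass F G G] {f : F}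

theorem exists_nhds_one_forall_ge_iterate_mem (hf : Continuous f)
    (hf_contr : ∀ x : G, Tendsto (fun n => f^[n] x) atTop (𝓝 1)) {W : Set G} (hW : W ∈ 𝓝 1) :
    ∃ N : ℕ, ∃ Q ∈ 𝓝 (1 : G), ∀ n ≥ N, ∀ x ∈ Q, f^[n] x ∈ W := by
  obtain ⟨S, hS, hSW⟩ := exists_nhds_split_inv hW
  obtain ⟨V, hV, hV_closed, hVS⟩ := exists_mem_nhds_isClosed_subset hS
  let E : ℕ → Set G := fun N => ⋂ m : ℕ, f^[N + m] ⁻¹' V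
  have hE_closed : ∀ N, IsClosed (E N) := fun N =>
    isClosed_iInter fun m => hV_closed.preimage (hf.iterate _)
  have hE_cover : ⋃ N, E N = univ := eq_univ_of_forall fun x => by
    obtain ⟨N, hN⟩ := eventually_atTop.1 ((hf_contr x).eventually_mem hV)
    exact mem_iUnion.2 ⟨N, mem_iInter.2 fun m => hN _ (N.le_add_right m)⟩
  obtain ⟨N, x₀, hx₀⟩ := nonempty_interior_of_iUnion_of_closed hE_closed hE_cover
  have hQ : (· * x₀) ⁻¹' interior (E N) ∈ 𝓝 (1 : G) :=
    (continuous_mul_const x₀).continuousAt.preimage_mem_nhds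
      (by simpa using isOpen_interior.mem_nhds hx₀)
  refine ⟨N, _, hQ, fun n hn x hx => ?_⟩
  obtain ⟨m, rfl⟩ := Nat.exists_eq_add_of_le hn
  have hxx₀ : f^[N + m] (x * x₀) ∈ V := mem_iInter.1 (interior_subset hx) m
  have hx₀ : f^[N + m] x₀ ∈ V := mem_iInter.1 (interior_subset hx₀) m
  have := hSW _ (hVS hxx₀) _ (hVS hx₀)
  rwa [← iterate_map_div, mul_div_cancel_right] at this

theorem iInter_preimage_iterate_mem_nhds_one (hf : Continuous f)
    (hf_contr : ∀ x : G, Tendsto (fun n => f^[n] x) atTop (𝓝 1)) {W : Set G} (hW : W ∈ 𝓝 1) :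
    ⋂ n : ℕ, f^[n] ⁻¹' W ∈ 𝓝 (1 : G) := by
  obtain ⟨N, Q, hQ, hQW⟩ := exists_nhds_one_forall_ge_iterate_mem hf hf_contr hW
  have h_init : ⋂ n ∈ Finset.range N, f^[n] ⁻¹' W ∈ 𝓝 (1 : G) :=
    (biInter_finset_mem _).2 fun n _ =>
      (hf.iterate n).continuousAt.preimage_mem_nhds (by rwa [iterate_map_one])
  filter_upwards [hQ, h_init] with x hxQ hx_init
  refine mem_iInter.2 fun n => ?_
  rcases lt_or_ge n N with hn | hn
  · exact mem_iInter₂.1 hx_init n (Finset.mem_range.2 hn)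
  · exact hQW n hn x hxQ

theorem eventually_image_iterate_subset_of_isCompact (hf : Continuous f)
    (hf_contr : ∀ x : G, Tendsto (fun n => f^[n] x) atTop (𝓝 1)) {K W : Set G}
    (hK : IsCompact K) (hW : W ∈ 𝓝 1) :
    ∀ᶠ n in atTop, f^[n] '' K ⊆ W := by
  obtain ⟨S, hS_open, hS_one, hSW⟩ := exists_open_nhds_one_mul_subset hW
  have hS : S ∈ 𝓝 (1 : G) := hS_open.mem_nhds hS_one
  have hQ := iInter_preimage_iterate_mem_nhds_one hf hf_contr hS
  obtain ⟨t, -, hKt⟩ := hK.elim_nhds_subcover (fun x => (x⁻¹ * ·) ⁻¹' ⋂ n, f^[n] ⁻¹' S)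
    fun x _ => (continuous_const_mul x⁻¹).continuousAt.preimage_mem_nhds (by simpa using hQ)
  have h_finite : ∀ᶠ n in atTop, ∀ x ∈ t, f^[n] x ∈ S :=
    (eventually_all_finset t).2 fun x _ => (hf_contr x).eventually_mem hS
  filter_upwards [h_finite] with n hn
  rintro _ ⟨y, hy, rfl⟩
  obtain ⟨x, hxt, hxy⟩ := mem_iUnion₂.1 (hKt hy)
  have hy_eq : f^[n] y = f^[n] x * f^[n] (x⁻¹ * y) := by
    rw [← iterate_map_mul, mul_inv_cancel_left]
  exact hy_eq ▸ hSW (mul_mem_mul (hn x hxt) (mem_iInter.1 hxy n))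

theorem hasBasis_nhds_one_image_iterate (hf : Continuous f) (hf_open : IsOpenMap f)
    (hf_contr : ∀ x : G, Tendsto (fun n => f^[n] x) atTop (𝓝 1)) {U : Set G}
    (hU_compact : IsCompact U) (hU : U ∈ 𝓝 1) :
    (𝓝 (1 : G)).HasBasis (fun _ : ℕ => True) (fun n => f^[n] '' U) := by
  refine ⟨fun W => ⟨fun hW => ?_, fun ⟨n, _, hn⟩ => mem_of_superset ?_ hn⟩⟩
  · obtain ⟨n, hn⟩ :=
      (eventually_image_iterate_subset_of_isCompact hf hf_contr hU_compact hW).exists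
    exact ⟨n, trivial, hn⟩
  · simpa using (hf_open.iterate n).image_mem_nhds hU

end ContractiveEndomorphism

/-- If G is a locally compact Hausdorff topological group with a contractive
automorphism φ, then there is a compact neighborhood U of 1 with φ(U) ⊆ U,
⋂ₙ φⁿ(U) = {1}, and (φⁿ(U))ₙ a neighborhood base at 1. -/
theorem contractive_automorphism_compact_nbhd_base
    {G : Type*} [TopologicalSpace G] [Group G] [IsTopologicalGroup G]
    [LocallyCompactSpace G] [T2Space G]
    (φ : G ≃* G) (hcont : Continuous φ) (hcont' : Continuous φ.symm)
    (hcontr : ∀ x : G, Filter.Tendsto (fun n => (⇑φ)^[n] x) Filter.atTop (nhds (1 : G))) :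
    ∃ U : Set G, IsCompact U ∧ U ∈ nhds (1 : G) ∧ ⇑φ '' U ⊆ U ∧
      (⋂ n : ℕ, (⇑φ)^[n] '' U) = {(1 : G)} ∧
      (nhds (1 : G)).HasBasis (fun _ : ℕ => True) (fun n => (⇑φ)^[n] '' U) := by
  obtain ⟨V, hV_compact, hV⟩ := exists_compact_mem_nhds (1 : G)
  set U := ⋂ n : ℕ, (⇑φ)^[n] ⁻¹' V
  have hU_compact : IsCompact U := hV_compact.of_isClosed_subset
    (isClosed_iInter fun n => hV_compact.isClosed.preimage (hcont.iterate n)) (iInter_subset _ 0)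
  have hU : U ∈ 𝓝 1 := iInter_preimage_iterate_mem_nhds_one hcont hcontr hV
  have hbasis := hasBasis_nhds_one_image_iterate hcont
    (Homeomorph.mk φ.toEquiv hcont hcont').isOpenMap hcontr hU_compact hU
  refine ⟨U, hU_compact, hU, (mapsTo_iInter_preimage_iterate φ V).image_subset, ?_, hbasis⟩
  simpa using biInter_basis_nhds hbasis
end

section
/- Let G be a local group, and define the relations ⇝ (some parenthesization evaluates) and → (all parenthesizations evaluate, recursively). If (a₁,…,aₙ) → b and (a₁,…,aₙ) ⇝ c, then b = c. -/
/-- A local group: a set with an identity, a product with domain `defined` (Ω). -/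
structure LocalMul (G : Type*) where
  one : G
  mul : G → G → G
  defined : G → G → Prop

namespace LocalMul

variable {G : Type*}

/-- `(a₁,…,aₙ) ⇝ b`: SOME parenthesization evaluates to `b`. -/
inductive Eval (M : LocalMul G) : List G → G → Prop
  | nil : Eval M [] M.one
  | single (a : G) : Eval M [a] a
  | app {l₁ l₂ : List G} {b c : G} : l₁ ≠ [] → l₂ ≠ [] →
      Eval M l₁ b → Eval M l₂ c → M.defined b c → Eval M (l₁ ++ l₂) (M.mul b c)

/-- `(a₁,…,aₙ) → b`: for EVERY cut point `i` there are `b′`, `b″` with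
`(a₁,…,a_i) → b′`, `(a_{i+1},…,aₙ) → b″`, `(b′,b″) ∈ Ω`, `b′b″ = b`. -/
def AllEval (M : LocalMul G) : List G → G → Prop
  | [], b => b = M.one
  | [a], b => b = a
  | x :: y :: rest, b =>
      ∀ i : ℕ, 0 < i → i < (x :: y :: rest).length →
        ∃ b' b'' : G, AllEval M ((x :: y :: rest).take i) b' ∧
          AllEval M ((x :: y :: rest).drop i) b'' ∧
          M.defined b' b'' ∧ M.mul b' b'' = b
termination_by l _ => l.length
decreasing_by all_goals (simp only [List.length_take, List.length_drop, List.length_cons] at *; omega)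

lemma allEval_cut {M : LocalMul G} {l : List G} {b : G} (h2 : 2 ≤ l.length)
    (h : M.AllEval l b) :
    ∀ i : ℕ, 0 < i → i < l.length →
      ∃ b' b'' : G, M.AllEval (l.take i) b' ∧ M.AllEval (l.drop i) b'' ∧
        M.defined b' b'' ∧ M.mul b' b'' = b := by
  match l with
  | [] => simp at h2
  | [a] => simp at h2
  | x :: y :: rest => rw [LocalMul.AllEval] at h; exact h

end LocalMul

/-- If `(a₁,…,aₙ) → b` and `(a₁,…,aₙ) ⇝ c`, then `b = c`. -/
theorem allEval_eval_unique {G : Type*} (M : LocalMul G) :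
    ∀ (l : List G) (b c : G), M.AllEval l b → M.Eval l c → b = c := by
  intro l b c hall hev
  induction hev generalizing b with
  | nil => simpa [LocalMul.AllEval] using hall
  | single a => simpa [LocalMul.AllEval] using hall
  | @app l₁ l₂ c₁ c₂ h1 h2 e1 e2 hd ih1 ih2 =>
    have hlen : 2 ≤ (l₁ ++ l₂).length := by
      rcases List.exists_cons_of_ne_nil h1 with ⟨x, t, rfl⟩
      rcases List.exists_cons_of_ne_nil h2 with ⟨y, s, rfl⟩
      simp; omega
    have hi0 : 0 < l₁.length := List.length_pos_iff.mpr h1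
    have hi1 : l₁.length < (l₁ ++ l₂).length := by
      have := List.length_pos_iff.mpr h2
      simp; omega
    obtain ⟨b', b'', hb', hb'', _, heq⟩ :=
      LocalMul.allEval_cut hlen hall l₁.length hi0 hi1
    rw [List.take_left] at hb'
    rw [List.drop_left] at hb''
    rw [← heq, ih1 b' hb', ih2 b'' hb'']
end

section
/- In the free construction on a neat globally associative local group G (words over G modulo contractions/expansions), the quotient set H with concatenation and formal inversion is a group, with identity the class of the empty word, and the class of the one-letter word (1) also equals the identity. -/
/-- A neat local group: inversion is everywhere defined, products with the
identity and with inverses are defined, partial associativity holds, and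
`(xy, y⁻¹) ∈ Ω` whenever `(x, y) ∈ Ω`. -/
class NeatLocalGroup (G : Type*) where
  one : G
  mul : G → G → G
  inv : G → G
  defined : G → G → Prop
  defined_one_left : ∀ x : G, defined one x
  defined_one_right : ∀ x : G, defined x one
  one_mul : ∀ x : G, mul one x = x
  mul_one : ∀ x : G, mul x one = x
  defined_inv_left : ∀ x : G, defined (inv x) x
  defined_inv_right : ∀ x : G, defined x (inv x)
  inv_mul_cancel : ∀ x : G, mul (inv x) x = one
  mul_inv_cancel : ∀ x : G, mul x (inv x) = one
  mul_assoc : ∀ x y z : G, defined x y → defined y z → defined (mul x y) z →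
      defined x (mul y z) → mul (mul x y) z = mul x (mul y z)
  neat : ∀ x y : G, defined x y → defined (mul x y) (inv y)

namespace NeatLocalGroup

variable {G : Type*} [NeatLocalGroup G]

/-- One contraction step on words over `G`: either merge an adjacent pair
whose product is defined (type I), or delete an adjacent pair `(a, a⁻¹)`
(type II).  `Step x y` means `y` is a contraction of `x`; equivalently, `x`
is an expansion of `y`. -/
inductive Step : List G → List G → Prop
  | contr1 (u v : List G) (a b : G) (h : defined a b) :
      Step (u ++ a :: b :: v) (u ++ mul a b :: v)
  | contr2 (u v : List G) (a : G) :
      Step (u ++ a :: inv a :: v) (u ++ v)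

/-- Two words are equivalent iff they are connected by a finite chain of
contractions and expansions. -/
instance wordSetoid : Setoid (List G) :=
  ⟨Relation.EqvGen Step, Relation.EqvGen.is_equivalence _⟩

/-- The set of equivalence classes of words over `G`. -/
abbrev WordQuot (G : Type*) [NeatLocalGroup G] : Type _ :=
  Quotient (wordSetoid (G := G))

/-- `(a₁,…,aₙ) ⇝ b`: some parenthesization of the word has all intermediate
products defined and evaluates to `b`. -/
inductive Eval : List G → G → Prop
  | nil : Eval [] (one : G)
  | single (a : G) : Eval [a] a
  | app {l₁ l₂ : List G} {b c : G} : l₁ ≠ [] → l₂ ≠ [] →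
      Eval l₁ b → Eval l₂ c → defined b c → Eval (l₁ ++ l₂) (mul b c)

/-- `G` is globally associative if any two parenthesized evaluations of the
same word agree. -/
def GloballyAssociative (G : Type*) [NeatLocalGroup G] : Prop :=
  ∀ (l : List G) (b c : G), Eval l b → Eval l c → b = c

end NeatLocalGroup

namespace NeatLocalGroup

variable {G : Type*} [NeatLocalGroup G]

local notation "E" => Relation.EqvGen (Step (G := G))

/-- The formal inverse of a word. -/
def invWord (l : List G) : List G := (l.map (inv : G → G)).reverse

lemma step_append_right {x y : List G} (h : Step x y) (w : List G) :
    Step (x ++ w) (y ++ w) := by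
  cases h with
  | contr1 u v a b hd =>
      simpa [List.append_assoc] using Step.contr1 u (v ++ w) a b hd
  | contr2 u v a =>
      simpa [List.append_assoc] using Step.contr2 u (v ++ w) a

lemma step_append_left {x y : List G} (h : Step x y) (w : List G) :
    Step (w ++ x) (w ++ y) := by
  cases h with
  | contr1 u v a b hd =>
      simpa [List.append_assoc] using Step.contr1 (w ++ u) v a b hd
  | contr2 u v a =>
      simpa [List.append_assoc] using Step.contr2 (w ++ u) v a

lemma eqv_append_right {x y : List G} (h : E x y) (w : List G) :
    E (x ++ w) (y ++ w) := by
  induction h with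
  | rel a b h => exact Relation.EqvGen.rel _ _ (step_append_right h w)
  | refl a => exact Relation.EqvGen.refl _
  | symm a b _ ih => exact Relation.EqvGen.symm _ _ ih
  | trans a b c _ _ ih1 ih2 => exact Relation.EqvGen.trans _ _ _ ih1 ih2

lemma eqv_append_left {x y : List G} (h : E x y) (w : List G) :
    E (w ++ x) (w ++ y) := by
  induction h with
  | rel a b h => exact Relation.EqvGen.rel _ _ (step_append_left h w)
  | refl a => exact Relation.EqvGen.refl _
  | symm a b _ ih => exact Relation.EqvGen.symm _ _ ih
  | trans a b c _ _ ih1 ih2 => exact Relation.EqvGen.trans _ _ _ ih1 ih2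

lemma eqv_append {x x' y y' : List G} (hx : E x x') (hy : E y y') :
    E (x ++ y) (x' ++ y') :=
  Relation.EqvGen.trans _ _ _ (eqv_append_right hx y) (eqv_append_left hy x')

lemma inv_one_eq : (inv (one : G)) = one := by
  have h1 := inv_mul_cancel (one : G)
  have h2 := mul_one (inv (one : G))
  rw [h2] at h1
  exact h1

lemma eqv_one_nil : E [(one : G)] ([] : List G) := by
  have h1 : Step ([(one : G), one]) ([] : List G) := by
    have := Step.contr2 ([] : List G) ([] : List G) (one : G)
    simpa [inv_one_eq] using this
  have h2 : Step ([(one : G), one]) ([(one : G)]) := by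
    have := Step.contr1 ([] : List G) ([] : List G) (one : G) (one : G)
      (defined_one_left one)
    simpa [one_mul] using this
  exact Relation.EqvGen.trans _ _ _
    (Relation.EqvGen.symm _ _ (Relation.EqvGen.rel _ _ h2))
    (Relation.EqvGen.rel _ _ h1)

lemma eqv_one_cons (l : List G) : E ((one : G) :: l) l := by
  cases l with
  | nil => exact eqv_one_nil
  | cons b l' =>
      have := Step.contr1 ([] : List G) l' (one : G) b (defined_one_left b)
      simpa [one_mul] using Relation.EqvGen.rel _ _ this

lemma invWord_cons (a : G) (l : List G) :
    invWord (a :: l) = invWord l ++ [inv a] := by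
  simp [invWord]

lemma inv_mul_self (l : List G) : E (invWord l ++ l) ([] : List G) := by
  induction l with
  | nil => exact Relation.EqvGen.refl _
  | cons a l ih =>
      have h1 : Step (invWord l ++ (inv a :: a :: l)) (invWord l ++ (one : G) :: l) := by
        simpa [inv_mul_cancel] using
          Step.contr1 (invWord l) l (inv a) a (defined_inv_left a)
      have h2 : E (invWord l ++ (one : G) :: l) (invWord l ++ l) :=
        eqv_append_left (eqv_one_cons l) (invWord l)
      have heq : invWord (a :: l) ++ (a :: l) = invWord l ++ (inv a :: a :: l) := by
        simp [invWord_cons, List.append_assoc]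
      rw [heq]
      exact Relation.EqvGen.trans _ _ _
        (Relation.EqvGen.trans _ _ _ (Relation.EqvGen.rel _ _ h1) h2) ih

lemma mul_inv_self (l : List G) : E (l ++ invWord l) ([] : List G) := by
  induction l with
  | nil => exact Relation.EqvGen.refl _
  | cons a l ih =>
      have heq : (a :: l) ++ invWord (a :: l)
          = [a] ++ ((l ++ invWord l) ++ [inv a]) := by
        simp [invWord_cons, List.append_assoc]
      rw [heq]
      have h1 : E ([a] ++ ((l ++ invWord l) ++ [inv a])) ([a] ++ ([] ++ [inv a])) :=
        eqv_append_left (eqv_append_right ih [inv a]) [a]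
      have h2 : Step ([a, inv a]) ([] : List G) := by
        simpa using Step.contr2 ([] : List G) ([] : List G) a
      exact Relation.EqvGen.trans _ _ _ h1
        (by simpa using Relation.EqvGen.rel _ _ h2)

lemma invWord_respects {x y : List G} (h : E x y) : E (invWord x) (invWord y) := by
  have h1 : E (invWord x) (invWord x ++ (y ++ invWord y)) := by
    have := eqv_append_left (Relation.EqvGen.symm _ _ (mul_inv_self y)) (invWord x)
    simpa using this
  have h2 : E (invWord x ++ (y ++ invWord y)) (invWord x ++ (x ++ invWord y)) :=
    eqv_append_left (eqv_append_right (Relation.EqvGen.symm _ _ h) (invWord y))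
      (invWord x)
  have h3 : E (invWord x ++ (x ++ invWord y)) (invWord y) := by
    have := eqv_append_right (inv_mul_self x) (invWord y)
    simpa [List.append_assoc] using this
  exact Relation.EqvGen.trans _ _ _ (Relation.EqvGen.trans _ _ _ h1 h2) h3

end NeatLocalGroup

open NeatLocalGroup in
/-- Mal'cev's construction: the quotient of the set of words over a neat,
globally associative local group `G` by contraction/expansion equivalence is
a group under concatenation and formal inversion, with identity the class of
the empty word; the class of the one-letter word `(1)` is also the identity. -/
theorem wordQuot_group (G : Type*) [NeatLocalGroup G]
    (hGA : GloballyAssociative G) :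
    ∃ grp : Group (WordQuot G),
      (∀ x y : List G, grp.mul ⟦x⟧ ⟦y⟧ = (⟦x ++ y⟧ : WordQuot G)) ∧
      (∀ x : List G,
        grp.inv ⟦x⟧ = (⟦(x.map (inv : G → G)).reverse⟧ : WordQuot G)) ∧
      grp.one = (⟦([] : List G)⟧ : WordQuot G) ∧
      (⟦[(one : G)]⟧ : WordQuot G) = grp.one := by
  refine ⟨{
    mul := Quotient.map₂ (· ++ ·) (fun x x' hx y y' hy => eqv_append hx hy)
    one := (⟦([] : List G)⟧ : WordQuot G)
    inv := Quotient.map invWord (fun x y h => invWord_respects h)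
    mul_assoc := ?_
    one_mul := ?_
    mul_one := ?_
    inv_mul_cancel := ?_ }, ?_, ?_, ?_, ?_⟩
  · intro a b c
    induction a using Quotient.inductionOn
    induction b using Quotient.inductionOn
    induction c using Quotient.inductionOn
    exact congrArg (Quotient.mk _) (List.append_assoc _ _ _)
  · intro a
    induction a using Quotient.inductionOn
    exact congrArg (Quotient.mk _) (List.nil_append _)
  · intro a
    induction a using Quotient.inductionOn
    exact congrArg (Quotient.mk _) (List.append_nil _)
  · intro a
    induction a using Quotient.inductionOn with
    | h x => exact Quotient.sound (inv_mul_self x)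
  · intro x y; rfl
  · intro x; rfl
  · rfl
  · exact Quotient.sound eqv_one_nil
end

section
/- (Mal'cev's theorem, injectivity part) Let G be a neat and globally associative local group, and H the group of words over G modulo contractions/expansions. Then the canonical map ι : G → H, g ↦ [(g)], is injective. -/
namespace NeatLocalGroup

variable {G : Type*} [NeatLocalGroup G]

theorem inv_inv' (x : G) : inv (inv x) = x := by
  have h := mul_assoc (inv (inv x)) (inv x) x (defined_inv_left (inv x)) (defined_inv_left x)
    (by rw [inv_mul_cancel]; exact defined_one_left x)
    (by rw [inv_mul_cancel]; exact defined_one_right _)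
  rw [inv_mul_cancel, inv_mul_cancel, one_mul, mul_one] at h
  exact h.symm

theorem mul_inv_right {x y : G} (h : defined x y) : mul (mul x y) (inv y) = x := by
  have h2 := mul_assoc x y (inv y) h (defined_inv_right y) (neat x y h)
    (by rw [mul_inv_cancel]; exact defined_one_right x)
  rwa [mul_inv_cancel, mul_one] at h2

theorem eval_pair {a b : G} (h : defined a b) : Eval [a, b] (mul a b) := by
  have := Eval.app (l₁ := [a]) (l₂ := [b]) (by simp) (by simp) (Eval.single a) (Eval.single b) h
  simpa using this

theorem eval_inv_pair (a : G) : Eval [a, inv a] (one : G) := by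
  have := eval_pair (defined_inv_right a)
  rwa [mul_inv_cancel] at this

theorem eval_replace {m : List G} {g : G} (hm : m ≠ []) (hg : Eval m g) :
    ∀ {l : List G} {x : G}, Eval l x → ∀ u v : List G, l = u ++ g :: v →
      Eval (u ++ m ++ v) x := by
  intro l x h
  induction h with
  | nil =>
      intro u v huv
      exact absurd huv (by simp)
  | single a =>
      intro u v huv
      cases u with
      | nil =>
          simp only [List.nil_append] at huv ⊢
          obtain ⟨rfl, rfl⟩ : a = g ∧ v = [] := by simpa using huv
          simpa using hg
      | cons x' u' =>
          simp only [List.cons_append] at huv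
          obtain ⟨rfl, h2⟩ := List.cons.injEq .. ▸ huv
          exact absurd h2.symm (by simp)
  | app h₁ h₂ e₁ e₂ hd ih₁ ih₂ =>
      intro u v huv
      rcases List.append_eq_append_iff.mp huv with ⟨t, rfl, hl2⟩ | ⟨t, rfl, hgv⟩
      · have := ih₂ t v hl2
        have h3 := Eval.app (l₂ := t ++ m ++ v) h₁ (by simp [hm]) e₁ this hd
        simpa [List.append_assoc] using h3
      · rcases List.cons_eq_append_iff.mp hgv with ⟨rfl, rfl⟩ | ⟨t', rfl, rfl⟩
        · have := ih₂ [] v rfl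
          have h3 := Eval.app (l₂ := [] ++ m ++ v) h₁ (by simp [hm]) e₁ this hd
          simpa [List.append_assoc] using h3
        · have := ih₁ u t' (by simp)
          have h3 := Eval.app (l₁ := u ++ m ++ t') (by simp [hm]) h₂ this e₂ hd
          simpa [List.append_assoc] using h3

theorem eval_insert {m : List G} (hm : m ≠ []) (hg : Eval m (one : G)) :
    ∀ {l : List G} {x : G}, Eval l x → ∀ u v : List G, l = u ++ v →
      Eval (u ++ m ++ v) x := by
  intro l x h
  induction h with
  | nil =>
      intro u v huv
      obtain ⟨rfl, rfl⟩ := List.append_eq_nil_iff.mp huv.symm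
      simpa using hg
  | single a =>
      intro u v huv
      cases u with
      | nil =>
          simp only [List.nil_append] at huv; subst huv
          have h3 := Eval.app (l₁ := m) (l₂ := [a]) hm (by simp) hg (Eval.single a)
            (defined_one_left a)
          rw [one_mul] at h3
          simpa using h3
      | cons x' u' =>
          simp only [List.cons_append] at huv
          obtain ⟨rfl, h2⟩ := List.cons.injEq .. ▸ huv
          obtain ⟨rfl, rfl⟩ := List.append_eq_nil_iff.mp h2.symm
          have h3 := Eval.app (l₁ := [a]) (l₂ := m) (by simp) hm (Eval.single a) hg
            (defined_one_right a)
          rw [mul_one] at h3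
          simpa using h3
  | app h₁ h₂ e₁ e₂ hd ih₁ ih₂ =>
      intro u v huv
      rcases List.append_eq_append_iff.mp huv with ⟨t, rfl, hl2⟩ | ⟨t, rfl, rfl⟩
      · have := ih₂ t v hl2
        have h3 := Eval.app (l₂ := t ++ m ++ v) h₁ (by simp [hm]) e₁ this hd
        simpa [List.append_assoc] using h3
      · have := ih₁ u t rfl
        have h3 := Eval.app (l₁ := u ++ m ++ t) (by simp [hm]) h₂ this e₂ hd
        simpa [List.append_assoc] using h3

theorem eval_of_step {w w' : List G} (h : Step w w') {y : G} (hy : Eval w' y) : Eval w y := by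
  cases h with
  | contr1 u v a b hab =>
      have := eval_replace (m := [a, b]) (by simp) (eval_pair hab) hy u v rfl
      simpa [List.append_assoc] using this
  | contr2 u v a =>
      have := eval_insert (m := [a, inv a]) (by simp) (eval_inv_pair a) hy u v rfl
      simpa [List.append_assoc] using this

theorem eval_of_chain {w w' : List G} (h : Relation.ReflTransGen Step w w') :
    ∀ {y : G}, Eval w' y → Eval w y := by
  induction h with
  | refl => exact fun hy => hy
  | tail _ h2 ih => exact fun hy => ih (eval_of_step h2 hy)

theorem step_cases {w w' : List G} (h : Step w w') :
    (∃ u v a b, defined a b ∧ w = u ++ a :: b :: v ∧ w' = u ++ mul a b :: v) ∨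
    (∃ u v a, w = u ++ a :: inv a :: v ∧ w' = u ++ v) := by
  cases h with
  | contr1 u v a b hd => exact Or.inl ⟨u, v, a, b, hd, rfl, rfl⟩
  | contr2 u v a => exact Or.inr ⟨u, v, a, rfl, rfl⟩

theorem diamond (a b c : List G) (hb : Step b a) (hc : Step c a) :
    ∃ d, Relation.ReflGen (Function.swap Step) b d ∧
      Relation.ReflTransGen (Function.swap Step) c d := by
  rcases step_cases hb with ⟨u₁, v₁, p₁, q₁, h₁, rfl, ha₁⟩ | ⟨u₁, v₁, r₁, rfl, ha₁⟩
  · rcases step_cases hc with ⟨u₂, v₂, p₂, q₂, h₂, rfl, ha₂⟩ | ⟨u₂, v₂, r₂, rfl, ha₂⟩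
    · -- contr1 / contr1
      have key : u₁ ++ mul p₁ q₁ :: v₁ = u₂ ++ mul p₂ q₂ :: v₂ := ha₁.symm.trans ha₂
      rcases List.append_eq_append_iff.mp key with ⟨t, rfl, hl⟩ | ⟨t, rfl, hl⟩
      · rcases List.cons_eq_append_iff.mp hl with ⟨rfl, hl2⟩ | ⟨t', rfl, rfl⟩
        · -- same letter
          injection hl2 with hm hv
          subst hv
          refine ⟨u₁ ++ p₁ :: q₁ :: inv q₂ :: q₂ :: v₂, ?_, ?_⟩
          · refine Relation.ReflGen.single ?_
            have s1 := Step.contr2 (u₁ ++ [p₁, q₁]) v₂ (inv q₂)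
            rw [inv_inv'] at s1
            simpa [List.append_assoc] using s1
          · have s2 : Step (u₁ ++ mul p₁ q₁ :: inv q₂ :: q₂ :: v₂)
                ((u₁ ++ []) ++ p₂ :: q₂ :: v₂) := by
              have hd2 : defined (mul p₁ q₁) (inv q₂) := by
                rw [← hm]; exact neat p₂ q₂ h₂
              have s2' := Step.contr1 u₁ (q₂ :: v₂) (mul p₁ q₁) (inv q₂) hd2
              have hval : mul (mul p₁ q₁) (inv q₂) = p₂ := by
                rw [← hm]; exact mul_inv_right h₂
              rw [hval] at s2'
              simpa using s2'
            have s3 : Step (u₁ ++ p₁ :: q₁ :: inv q₂ :: q₂ :: v₂)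
                (u₁ ++ mul p₁ q₁ :: inv q₂ :: q₂ :: v₂) :=
              Step.contr1 u₁ (inv q₂ :: q₂ :: v₂) p₁ q₁ h₁
            have e1 : Relation.ReflTransGen (Function.swap Step)
                ((u₁ ++ []) ++ p₂ :: q₂ :: v₂)
                (u₁ ++ mul p₁ q₁ :: inv q₂ :: q₂ :: v₂) :=
              Relation.ReflTransGen.single s2
            exact e1.tail s3
        · -- letter 1 strictly left of letter 2
          refine ⟨u₁ ++ p₁ :: q₁ :: (t' ++ p₂ :: q₂ :: v₂), ?_, ?_⟩
          · refine Relation.ReflGen.single ?_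
            have s1 := Step.contr1 (u₁ ++ p₁ :: q₁ :: t') v₂ p₂ q₂ h₂
            simpa [List.append_assoc] using s1
          · refine Relation.ReflTransGen.single ?_
            have s1 := Step.contr1 u₁ (t' ++ p₂ :: q₂ :: v₂) p₁ q₁ h₁
            simpa [List.append_assoc] using s1
      · rcases List.cons_eq_append_iff.mp hl with ⟨rfl, hl2⟩ | ⟨t', rfl, rfl⟩
        · -- same letter (mirror)
          injection hl2 with hm hv
          subst hv
          refine ⟨u₂ ++ p₁ :: q₁ :: inv q₂ :: q₂ :: v₁, ?_, ?_⟩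
          · refine Relation.ReflGen.single ?_
            have s1 := Step.contr2 (u₂ ++ [p₁, q₁]) v₁ (inv q₂)
            rw [inv_inv'] at s1
            simpa [List.append_assoc] using s1
          · have s2 : Step (u₂ ++ mul p₁ q₁ :: inv q₂ :: q₂ :: v₁)
                (u₂ ++ p₂ :: q₂ :: v₁) := by
              have hd2 : defined (mul p₁ q₁) (inv q₂) := by
                rw [hm]; exact neat p₂ q₂ h₂
              have s2' := Step.contr1 u₂ (q₂ :: v₁) (mul p₁ q₁) (inv q₂) hd2
              have hval : mul (mul p₁ q₁) (inv q₂) = p₂ := by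
                rw [hm]; exact mul_inv_right h₂
              rwa [hval] at s2'
            have s3 : Step (u₂ ++ p₁ :: q₁ :: inv q₂ :: q₂ :: v₁)
                (u₂ ++ mul p₁ q₁ :: inv q₂ :: q₂ :: v₁) :=
              Step.contr1 u₂ (inv q₂ :: q₂ :: v₁) p₁ q₁ h₁
            have e1 : Relation.ReflTransGen (Function.swap Step)
                (u₂ ++ p₂ :: q₂ :: v₁)
                (u₂ ++ mul p₁ q₁ :: inv q₂ :: q₂ :: v₁) :=
              Relation.ReflTransGen.single s2
            exact e1.tail s3
        · -- letter 2 strictly left of letter 1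
          refine ⟨u₂ ++ p₂ :: q₂ :: (t' ++ p₁ :: q₁ :: v₁), ?_, ?_⟩
          · refine Relation.ReflGen.single ?_
            have s1 := Step.contr1 u₂ (t' ++ p₁ :: q₁ :: v₁) p₂ q₂ h₂
            simpa [List.append_assoc] using s1
          · refine Relation.ReflTransGen.single ?_
            have s1 := Step.contr1 (u₂ ++ p₂ :: q₂ :: t') v₁ p₁ q₁ h₁
            simpa [List.append_assoc] using s1
    · -- contr1 / contr2 : b = u₁ ++ p₁ :: q₁ :: v₁, a = u₁ ++ mul p₁ q₁ :: v₁ = u₂ ++ v₂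
      have key : u₁ ++ mul p₁ q₁ :: v₁ = u₂ ++ v₂ := ha₁.symm.trans ha₂
      rcases List.append_eq_append_iff.mp key with ⟨t, rfl, hl⟩ | ⟨t, rfl, rfl⟩
      · rcases List.cons_eq_append_iff.mp hl with ⟨rfl, rfl⟩ | ⟨t', rfl, rfl⟩
        · -- t = [], v₂ = mul p₁ q₁ :: v₁
          refine ⟨u₁ ++ r₂ :: inv r₂ :: p₁ :: q₁ :: v₁, ?_, ?_⟩
          · refine Relation.ReflGen.single ?_
            have s1 := Step.contr2 u₁ (p₁ :: q₁ :: v₁) r₂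
            simpa [List.append_assoc] using s1
          · refine Relation.ReflTransGen.single ?_
            have s1 := Step.contr1 (u₁ ++ [r₂, inv r₂]) v₁ p₁ q₁ h₁
            simpa [List.append_assoc] using s1
        · -- u₂ = u₁ ++ mul p₁ q₁ :: t', v₁ = t' ++ v₂
          refine ⟨u₁ ++ p₁ :: q₁ :: (t' ++ r₂ :: inv r₂ :: v₂), ?_, ?_⟩
          · refine Relation.ReflGen.single ?_
            have s1 := Step.contr2 (u₁ ++ p₁ :: q₁ :: t') v₂ r₂
            simpa [List.append_assoc] using s1
          · refine Relation.ReflTransGen.single ?_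
            have s1 := Step.contr1 u₁ (t' ++ r₂ :: inv r₂ :: v₂) p₁ q₁ h₁
            simpa [List.append_assoc] using s1
      · -- u₁ = u₂ ++ t, v₂ = t ++ mul p₁ q₁ :: v₁
        refine ⟨u₂ ++ r₂ :: inv r₂ :: (t ++ p₁ :: q₁ :: v₁), ?_, ?_⟩
        · refine Relation.ReflGen.single ?_
          have s1 := Step.contr2 u₂ (t ++ p₁ :: q₁ :: v₁) r₂
          simpa [List.append_assoc] using s1
        · refine Relation.ReflTransGen.single ?_
          have s1 := Step.contr1 (u₂ ++ r₂ :: inv r₂ :: t) v₁ p₁ q₁ h₁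
          simpa [List.append_assoc] using s1
  · rcases step_cases hc with ⟨u₂, v₂, p₂, q₂, h₂, rfl, ha₂⟩ | ⟨u₂, v₂, r₂, rfl, ha₂⟩
    · -- contr2 / contr1 : b = u₁ ++ r₁ :: inv r₁ :: v₁, a = u₁ ++ v₁ = u₂ ++ mul p₂ q₂ :: v₂
      have key : u₁ ++ v₁ = u₂ ++ mul p₂ q₂ :: v₂ := ha₁.symm.trans ha₂
      rcases List.append_eq_append_iff.mp key with ⟨t, rfl, rfl⟩ | ⟨t, rfl, hl⟩
      · -- gap at/left of letter : u₂ = u₁ ++ t, v₁ = t ++ mul p₂ q₂ :: v₂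
        refine ⟨u₁ ++ r₁ :: inv r₁ :: (t ++ p₂ :: q₂ :: v₂), ?_, ?_⟩
        · refine Relation.ReflGen.single ?_
          have s1 := Step.contr1 (u₁ ++ r₁ :: inv r₁ :: t) v₂ p₂ q₂ h₂
          simpa [List.append_assoc] using s1
        · refine Relation.ReflTransGen.single ?_
          have s1 := Step.contr2 u₁ (t ++ p₂ :: q₂ :: v₂) r₁
          simpa [List.append_assoc] using s1
      · rcases List.cons_eq_append_iff.mp hl with ⟨rfl, rfl⟩ | ⟨t', rfl, rfl⟩
        · -- u₁ = u₂, v₁ = mul p₂ q₂ :: v₂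
          refine ⟨(u₂ ++ []) ++ r₁ :: inv r₁ :: p₂ :: q₂ :: v₂, ?_, ?_⟩
          · refine Relation.ReflGen.single ?_
            have s1 := Step.contr1 (u₂ ++ [r₁, inv r₁]) v₂ p₂ q₂ h₂
            simpa [List.append_assoc] using s1
          · refine Relation.ReflTransGen.single ?_
            have s1 := Step.contr2 u₂ (p₂ :: q₂ :: v₂) r₁
            simpa [List.append_assoc] using s1
        · -- u₁ = u₂ ++ mul p₂ q₂ :: t', v₂ = t' ++ v₁
          refine ⟨u₂ ++ p₂ :: q₂ :: (t' ++ r₁ :: inv r₁ :: v₁), ?_, ?_⟩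
          · refine Relation.ReflGen.single ?_
            have s1 := Step.contr1 u₂ (t' ++ r₁ :: inv r₁ :: v₁) p₂ q₂ h₂
            simpa [List.append_assoc] using s1
          · refine Relation.ReflTransGen.single ?_
            have s1 := Step.contr2 (u₂ ++ p₂ :: q₂ :: t') v₁ r₁
            simpa [List.append_assoc] using s1
    · -- contr2 / contr2
      have key : u₁ ++ v₁ = u₂ ++ v₂ := ha₁.symm.trans ha₂
      rcases List.append_eq_append_iff.mp key with ⟨t, rfl, rfl⟩ | ⟨t, rfl, rfl⟩
      · -- u₂ = u₁ ++ t, v₁ = t ++ v₂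
        refine ⟨u₁ ++ r₁ :: inv r₁ :: (t ++ r₂ :: inv r₂ :: v₂), ?_, ?_⟩
        · refine Relation.ReflGen.single ?_
          have s1 := Step.contr2 (u₁ ++ r₁ :: inv r₁ :: t) v₂ r₂
          simpa [List.append_assoc] using s1
        · refine Relation.ReflTransGen.single ?_
          have s1 := Step.contr2 u₁ (t ++ r₂ :: inv r₂ :: v₂) r₁
          simpa [List.append_assoc] using s1
      · -- u₁ = u₂ ++ t, v₂ = t ++ v₁
        refine ⟨u₂ ++ r₂ :: inv r₂ :: (t ++ r₁ :: inv r₁ :: v₁), ?_, ?_⟩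
        · refine Relation.ReflGen.single ?_
          have s1 := Step.contr2 u₂ (t ++ r₁ :: inv r₁ :: v₁) r₂
          simpa [List.append_assoc] using s1
        · refine Relation.ReflTransGen.single ?_
          have s1 := Step.contr2 (u₂ ++ r₂ :: inv r₂ :: t) v₁ r₁
          simpa [List.append_assoc] using s1

theorem eqvGen_join
    (heq : Equivalence (Relation.Join (Relation.ReflTransGen (Function.swap (Step (G := G))))))
    {a b : List G} (h : Relation.EqvGen Step a b) :
    Relation.Join (Relation.ReflTransGen (Function.swap (Step (G := G)))) a b := by
  induction h with
  | rel a b hab => exact ⟨a, Relation.ReflTransGen.refl, Relation.ReflTransGen.single hab⟩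
  | refl a => exact heq.refl a
  | symm a b _ ih => exact heq.symm ih
  | trans a b c _ _ ih1 ih2 => exact heq.trans ih1 ih2

end NeatLocalGroup

open NeatLocalGroup in
/-- (Mal'cev) For a neat, globally associative local group `G`, the canonical
map `g ↦ [(g)]` of `G` into the group of words modulo
contractions/expansions is injective. -/
theorem malcev_iota_injective (G : Type*) [NeatLocalGroup G]
    (hGA : GloballyAssociative G) :
    Function.Injective (fun g : G => (⟦[g]⟧ : WordQuot G)) := by
  intro x y h
  have hxy : Relation.EqvGen Step ([x] : List G) [y] := Quotient.exact h
  have heq : Equivalence (Relation.Join (Relation.ReflTransGen (Function.swap (Step (G := G))))) :=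
    Relation.equivalence_join_reflTransGen (fun a b c hab hac => diamond a b c hab hac)
  have hjoin : Relation.Join (Relation.ReflTransGen (Function.swap (Step (G := G)))) [x] [y] :=
    eqvGen_join heq hxy
  obtain ⟨w, hw1, hw2⟩ := hjoin
  have hx : Eval w x := eval_of_chain (Relation.reflTransGen_swap.mp hw1) (Eval.single x)
  have hy : Eval w y := eval_of_chain (Relation.reflTransGen_swap.mp hw2) (Eval.single y)
  exact hGA w x y hx hy
end

section
/- (Key commutation step) Let G be a neat local group and suppose word y is a contraction of word x and word z is an expansion of y. Then one can go from x to z by performing at most two expansions followed by one contraction. -/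
open NeatLocalGroup in
lemma nlg_mul_inv_cancel_right {G : Type*} [NeatLocalGroup G] (a b : G) (h : defined a b) :
    mul (mul a b) (inv b) = a := by
  have h3 : defined a (mul b (inv b)) := by
    rw [NeatLocalGroup.mul_inv_cancel]; exact defined_one_right a
  rw [mul_assoc a b (inv b) h (defined_inv_right b) (neat a b h) h3, NeatLocalGroup.mul_inv_cancel, NeatLocalGroup.mul_one]

open NeatLocalGroup in
lemma nlg_inv_inv {G : Type*} [NeatLocalGroup G] (x : G) : inv (inv x) = x := by
  have h1 : defined (inv (inv x)) (inv x) := defined_inv_left (inv x)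
  have h2 : defined (inv x) x := defined_inv_left x
  have h3 : defined (mul (inv (inv x)) (inv x)) x := by
    rw [NeatLocalGroup.inv_mul_cancel]; exact defined_one_left x
  have h4 : defined (inv (inv x)) (mul (inv x) x) := by
    rw [NeatLocalGroup.inv_mul_cancel]; exact defined_one_right _
  have h := mul_assoc _ _ _ h1 h2 h3 h4
  rw [NeatLocalGroup.inv_mul_cancel, NeatLocalGroup.inv_mul_cancel, NeatLocalGroup.one_mul,
    NeatLocalGroup.mul_one] at h
  exact h.symm

open NeatLocalGroup in
/-- Inversion lemma for `Step`. -/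
lemma nlg_step_cases {G : Type*} [NeatLocalGroup G] {x y : List G} (h : Step x y) :
    (∃ u v a b, defined a b ∧ x = u ++ a :: b :: v ∧ u ++ mul a b :: v = y) ∨
    (∃ u v a, x = u ++ a :: inv a :: v ∧ u ++ v = y) := by
  cases h with
  | contr1 u v a b h => exact Or.inl ⟨u, v, a, b, h, rfl, rfl⟩
  | contr2 u v a => exact Or.inr ⟨u, v, a, rfl, rfl⟩

open NeatLocalGroup in
/-- The overlapping case: both contractions are type I at the same position. -/
lemma nlg_same_pos_case {G : Type*} [NeatLocalGroup G] (u v : List G) (a b c d : G)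
    (hab : defined a b) (hcd : defined c d) (hm : mul c d = mul a b) :
    ∃ w : List G,
      (Step w (u ++ a :: b :: v) ∨
        ∃ v' : List G, Step v' (u ++ a :: b :: v) ∧ Step w v') ∧
      Step w (u ++ c :: d :: v) := by
  refine ⟨u ++ c :: d :: inv b :: b :: v,
    Or.inr ⟨u ++ mul c d :: inv b :: b :: v, ?_, ?_⟩, ?_⟩
  · have hd : defined (mul c d) (inv b) := hm ▸ neat a b hab
    have ha : mul (mul c d) (inv b) = a := by
      rw [hm, nlg_mul_inv_cancel_right a b hab]
    have s := Step.contr1 u (b :: v) (mul c d) (inv b) hd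
    rwa [ha] at s
  · exact Step.contr1 u (inv b :: b :: v) c d hcd
  · have s := Step.contr2 (u ++ [c, d]) v (inv b)
    rw [nlg_inv_inv] at s
    simpa using s

open NeatLocalGroup in
/-- (Key commutation step) If `y` is a contraction of `x` and `z` is an
expansion of `y`, then one can go from `x` to `z` by performing one or two
expansions followed by one contraction. -/
theorem expansion_contraction_commute (G : Type*) [NeatLocalGroup G]
    (x y z : List G) (hxy : Step x y) (hzy : Step z y) :
    ∃ w : List G,
      (Step w x ∨ ∃ v : List G, Step v x ∧ Step w v) ∧ Step w z := by
  rcases nlg_step_cases hxy with ⟨u₁, v₁, a, b, hab, rfl, rfl⟩ | ⟨u₁, v₁, a, rfl, rfl⟩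
  · rcases nlg_step_cases hzy with ⟨u₂, v₂, c, d, hcd, rfl, heq⟩ | ⟨u₂, v₂, c, rfl, heq⟩
    · rcases List.append_eq_append_iff.mp heq with ⟨t, hu, hv⟩ | ⟨t, hu, hv⟩
      · -- u₁ = u₂ ++ t, mul c d :: v₂ = t ++ mul a b :: v₁
        cases t with
        | nil =>
          simp only [List.append_nil] at hu
          simp only [List.nil_append, List.cons.injEq] at hv
          obtain ⟨hm, hvv⟩ := hv
          subst hu; subst hvv
          exact nlg_same_pos_case _ _ a b c d hab hcd hm
        | cons e t' =>
          simp only [List.cons_append, List.cons.injEq] at hv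
          obtain ⟨he, hvv⟩ := hv
          subst he; subst hu; subst hvv
          refine ⟨u₂ ++ c :: d :: (t' ++ a :: b :: v₁), Or.inl ?_, ?_⟩
          · simpa using Step.contr1 u₂ (t' ++ a :: b :: v₁) c d hcd
          · simpa using Step.contr1 (u₂ ++ c :: d :: t') v₁ a b hab
      · -- u₂ = u₁ ++ t, mul a b :: v₁ = t ++ mul c d :: v₂
        cases t with
        | nil =>
          simp only [List.append_nil] at hu
          simp only [List.nil_append, List.cons.injEq] at hv
          obtain ⟨hm, hvv⟩ := hv
          subst hu; subst hvv
          exact nlg_same_pos_case _ _ a b c d hab hcd hm.symm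
        | cons e t' =>
          simp only [List.cons_append, List.cons.injEq] at hv
          obtain ⟨he, hvv⟩ := hv
          subst he; subst hu; subst hvv
          refine ⟨u₁ ++ a :: b :: (t' ++ c :: d :: v₂), Or.inl ?_, ?_⟩
          · simpa using Step.contr1 (u₁ ++ a :: b :: t') v₂ c d hcd
          · simpa using Step.contr1 u₁ (t' ++ c :: d :: v₂) a b hab
    · -- heq : u₂ ++ v₂ = u₁ ++ mul a b :: v₁
      rcases List.append_eq_append_iff.mp heq with ⟨t, hu, hv⟩ | ⟨t, hu, hv⟩
      · -- u₁ = u₂ ++ t, v₂ = t ++ mul a b :: v₁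
        subst hu; subst hv
        refine ⟨u₂ ++ c :: inv c :: (t ++ a :: b :: v₁), Or.inl ?_, ?_⟩
        · simpa using Step.contr2 u₂ (t ++ a :: b :: v₁) c
        · simpa using Step.contr1 (u₂ ++ c :: inv c :: t) v₁ a b hab
      · -- u₂ = u₁ ++ t, mul a b :: v₁ = t ++ v₂
        cases t with
        | nil =>
          simp only [List.append_nil] at hu
          simp only [List.nil_append] at hv
          subst hu; subst hv
          refine ⟨u₂ ++ c :: inv c :: a :: b :: v₁, Or.inl ?_, ?_⟩
          · simpa using Step.contr2 u₂ (a :: b :: v₁) c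
          · simpa using Step.contr1 (u₂ ++ c :: inv c :: []) v₁ a b hab
        | cons e t' =>
          simp only [List.cons_append, List.cons.injEq] at hv
          obtain ⟨he, hvv⟩ := hv
          subst he; subst hu; subst hvv
          refine ⟨u₁ ++ a :: b :: (t' ++ c :: inv c :: v₂), Or.inl ?_, ?_⟩
          · simpa using Step.contr2 (u₁ ++ a :: b :: t') v₂ c
          · simpa using Step.contr1 u₁ (t' ++ c :: inv c :: v₂) a b hab
  · rcases nlg_step_cases hzy with ⟨u₂, v₂, c, d, hcd, rfl, heq⟩ | ⟨u₂, v₂, c, rfl, heq⟩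
    · -- heq : u₂ ++ mul c d :: v₂ = u₁ ++ v₁
      rcases List.append_eq_append_iff.mp heq with ⟨t, hu, hv⟩ | ⟨t, hu, hv⟩
      · -- u₁ = u₂ ++ t, mul c d :: v₂ = t ++ v₁
        cases t with
        | nil =>
          simp only [List.append_nil] at hu
          simp only [List.nil_append] at hv
          subst hu
          refine ⟨u₁ ++ a :: inv a :: c :: d :: v₂, Or.inl ?_, ?_⟩
          · rw [← hv]
            simpa using Step.contr1 (u₁ ++ a :: inv a :: []) v₂ c d hcd
          · simpa using Step.contr2 u₁ (c :: d :: v₂) a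
        | cons e t' =>
          simp only [List.cons_append, List.cons.injEq] at hv
          obtain ⟨he, hvv⟩ := hv
          subst he; subst hu; subst hvv
          refine ⟨u₂ ++ c :: d :: (t' ++ a :: inv a :: v₁), Or.inl ?_, ?_⟩
          · simpa using Step.contr1 u₂ (t' ++ a :: inv a :: v₁) c d hcd
          · simpa using Step.contr2 (u₂ ++ c :: d :: t') v₁ a
      · -- u₂ = u₁ ++ t, v₁ = t ++ mul c d :: v₂
        subst hu; subst hv
        refine ⟨u₁ ++ a :: inv a :: (t ++ c :: d :: v₂), Or.inl ?_, ?_⟩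
        · simpa using Step.contr1 (u₁ ++ a :: inv a :: t) v₂ c d hcd
        · simpa using Step.contr2 u₁ (t ++ c :: d :: v₂) a
    · -- heq : u₂ ++ v₂ = u₁ ++ v₁
      rcases List.append_eq_append_iff.mp heq with ⟨t, hu, hv⟩ | ⟨t, hu, hv⟩
      · -- u₁ = u₂ ++ t, v₂ = t ++ v₁
        subst hu; subst hv
        refine ⟨u₂ ++ c :: inv c :: (t ++ a :: inv a :: v₁), Or.inl ?_, ?_⟩
        · simpa using Step.contr2 u₂ (t ++ a :: inv a :: v₁) c
        · simpa using Step.contr2 (u₂ ++ c :: inv c :: t) v₁ a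
      · -- u₂ = u₁ ++ t, v₁ = t ++ v₂
        subst hu; subst hv
        refine ⟨u₁ ++ a :: inv a :: (t ++ c :: inv c :: v₂), Or.inl ?_, ?_⟩
        · simpa using Step.contr2 (u₁ ++ a :: inv a :: t) v₂ c
        · simpa using Step.contr2 u₁ (t ++ c :: inv c :: v₂) a
end

section
/- Let G be a neat, globally associative local group, ι : G → H its embedding into the Mal'cev globalization. Then for any local group morphism φ : G → L into a topological group L, there is a unique continuous group homomorphism φ̃ : H → L with φ̃ ∘ ι = φ. -/
/-! The extension is forced: on the class of a word `(a₁, …, aₙ)` it must take the value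
`φ a₁ ⋯ φ aₙ`. This product is invariant under both kinds of contraction because `φ` is
multiplicative on `Ω` and therefore also preserves inverses, so it descends to the
globalization; it is continuous at `1` because the sets `ι(U)` form a neighborhood base there. -/

namespace NeatLocalGroup

section Morphism

variable {G L : Type*} [NeatLocalGroup G] [Group L] {φ : G → L}

theorem map_one_of_map_mul (hφ : ∀ a b : G, defined a b → φ (mul a b) = φ a * φ b) :
    φ one = 1 :=
  mul_eq_left.mp <| by rw [← hφ _ _ (defined_one_left one), NeatLocalGroup.one_mul]

theorem map_inv_of_map_mul (hφ : ∀ a b : G, defined a b → φ (mul a b) = φ a * φ b) (a : G) :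
    φ (inv a) = (φ a)⁻¹ :=
  eq_inv_of_mul_eq_one_left <| by
    rw [← hφ _ _ (defined_inv_left a), inv_mul_cancel, map_one_of_map_mul hφ]

theorem Step.prod_map_eq (hφ : ∀ a b : G, defined a b → φ (mul a b) = φ a * φ b)
    {x y : List G} (h : Step x y) : (x.map φ).prod = (y.map φ).prod := by
  cases h with
  | contr1 u v a b hab => simp [hφ a b hab, _root_.mul_assoc]
  | contr2 u v a => simp [map_inv_of_map_mul hφ]

theorem prod_map_eq_of_equiv (hφ : ∀ a b : G, defined a b → φ (mul a b) = φ a * φ b)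
    {x y : List G} (h : x ≈ y) : (x.map φ).prod = (y.map φ).prod :=
  Setoid.eqvGen_le (s := Setoid.ker fun l : List G => (l.map φ).prod)
    (fun _ _ => Step.prod_map_eq hφ) h

end Morphism

section Globalization

variable {G : Type*} [NeatLocalGroup G] [Group (WordQuot G)]

theorem mk_nil_eq_one (hmulQ : ∀ x y : List G, (⟦x⟧ * ⟦y⟧ : WordQuot G) = ⟦x ++ y⟧) :
    (⟦[]⟧ : WordQuot G) = 1 :=
  mul_eq_left.mp (hmulQ [] [])

theorem mk_cons (hmulQ : ∀ x y : List G, (⟦x⟧ * ⟦y⟧ : WordQuot G) = ⟦x ++ y⟧) (a : G)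
    (l : List G) : (⟦a :: l⟧ : WordQuot G) = ⟦[a]⟧ * ⟦l⟧ :=
  (hmulQ [a] l).symm

theorem hom_ext_wordQuot {M : Type*} [Monoid M]
    (hmulQ : ∀ x y : List G, (⟦x⟧ * ⟦y⟧ : WordQuot G) = ⟦x ++ y⟧) {F F' : WordQuot G →* M}
    (h : ∀ g : G, F ⟦[g]⟧ = F' ⟦[g]⟧) : F = F' := by
  ext x
  induction x using Quotient.ind with | _ l
  induction l with
  | nil => rw [mk_nil_eq_one hmulQ, map_one, map_one]
  | cons a l ih => rw [mk_cons hmulQ, map_mul, map_mul, h, ih]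

variable {L : Type*} [Group L]

def liftHom (hmulQ : ∀ x y : List G, (⟦x⟧ * ⟦y⟧ : WordQuot G) = ⟦x ++ y⟧) (φ : G → L)
    (hφ : ∀ a b : G, defined a b → φ (mul a b) = φ a * φ b) : WordQuot G →* L where
  toFun := Quotient.lift (fun l => (l.map φ).prod) fun _ _ => prod_map_eq_of_equiv hφ
  map_one' := by rw [← mk_nil_eq_one hmulQ]; rfl
  map_mul' := Quotient.ind₂ fun x y => by
    rw [hmulQ]
    simp only [Quotient.lift_mk, List.map_append, List.prod_append]

variable (hmulQ : ∀ x y : List G, (⟦x⟧ * ⟦y⟧ : WordQuot G) = ⟦x ++ y⟧) {φ : G → L}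
  (hφ : ∀ a b : G, defined a b → φ (mul a b) = φ a * φ b)

@[simp]
theorem liftHom_mk_singleton (g : G) : liftHom hmulQ φ hφ ⟦[g]⟧ = φ g := by
  simp [liftHom]

theorem continuous_liftHom [TopologicalSpace G] [TopologicalSpace (WordQuot G)]
    [IsTopologicalGroup (WordQuot G)] [TopologicalSpace L] [ContinuousMul L]
    (hbasis : (nhds (1 : WordQuot G)).HasBasis
      (fun U : Set G => IsOpen U ∧ (one : G) ∈ U)
      (fun U : Set G => (fun g : G => (⟦[g]⟧ : WordQuot G)) '' U))
    (hφc : ContinuousAt φ one) : Continuous (liftHom hmulQ φ hφ) := by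
  refine continuous_of_continuousAt_one _ ?_
  rw [ContinuousAt, map_one, hbasis.tendsto_left_iff]
  intro V hV
  obtain ⟨U, hUV, hU, hoU⟩ := mem_nhds_iff.1 (hφc (by rwa [map_one_of_map_mul hφ]))
  refine ⟨U, ⟨hU, hoU⟩, ?_⟩
  rintro _ ⟨g, hg, rfl⟩
  simpa using hUV hg

end Globalization

end NeatLocalGroup

open NeatLocalGroup in
theorem malcev_universal_property_general
    {G L : Type*} [NeatLocalGroup G] [TopologicalSpace G]
    [Group (WordQuot G)] [TopologicalSpace (WordQuot G)]
    [IsTopologicalGroup (WordQuot G)]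
    (hmulQ : ∀ x y : List G, (⟦x⟧ * ⟦y⟧ : WordQuot G) = ⟦x ++ y⟧)
    (hbasis : (nhds (1 : WordQuot G)).HasBasis
      (fun U : Set G => IsOpen U ∧ (one : G) ∈ U)
      (fun U : Set G => (fun g : G => (⟦[g]⟧ : WordQuot G)) '' U))
    [Group L] [TopologicalSpace L] [IsTopologicalGroup L]
    (φ : G → L) (hφc : Continuous φ)
    (hφmul : ∀ a b : G, defined a b → φ (mul a b) = φ a * φ b) :
    ∃! F : WordQuot G →* L,
      Continuous F ∧ ∀ g : G, F (⟦[g]⟧ : WordQuot G) = φ g := by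
  refine ⟨liftHom hmulQ φ hφmul,
    ⟨continuous_liftHom hmulQ hφmul hbasis hφc.continuousAt, liftHom_mk_singleton hmulQ hφmul⟩, ?_⟩
  rintro F ⟨-, hF⟩
  exact hom_ext_wordQuot hmulQ fun g => by rw [hF, liftHom_mk_singleton]

open NeatLocalGroup in
/-- (Universal property of the Mal'cev globalization) Let `G` be a neat,
globally associative topological local group and let `H = WordQuot G` be its
globalization: a topological group structure whose multiplication is induced
by concatenation and in which the images under `ι : g ↦ [(g)]` of the open
neighborhoods of `1` in `G` form a neighborhood base at the identity.  Then
every continuous local group morphism `φ : G → L` into a topological group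
`L` extends uniquely to a continuous group homomorphism `φ̃ : H → L` with
`φ̃ ∘ ι = φ`. -/
theorem malcev_universal_property
    {G L : Type*} [NeatLocalGroup G] [TopologicalSpace G]
    [Group (WordQuot G)] [TopologicalSpace (WordQuot G)]
    [IsTopologicalGroup (WordQuot G)]
    (hGA : GloballyAssociative G)
    (hmulQ : ∀ x y : List G, (⟦x⟧ * ⟦y⟧ : WordQuot G) = ⟦x ++ y⟧)
    (honeQ : (1 : WordQuot G) = (⟦([] : List G)⟧ : WordQuot G))
    (hbasis : (nhds (1 : WordQuot G)).HasBasis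
      (fun U : Set G => IsOpen U ∧ (one : G) ∈ U)
      (fun U : Set G => (fun g : G => (⟦[g]⟧ : WordQuot G)) '' U))
    [Group L] [TopologicalSpace L] [IsTopologicalGroup L]
    (φ : G → L) (hφc : Continuous φ) (hφ1 : φ (one : G) = 1)
    (hφmul : ∀ a b : G, defined a b → φ (mul a b) = φ a * φ b) :
    ∃! F : WordQuot G →* L,
      Continuous F ∧ ∀ g : G, F (⟦[g]⟧ : WordQuot G) = φ g :=
  malcev_universal_property_general hmulQ hbasis φ hφc hφmul
end

section
/- Let φ : G → L be a map from a local group to a group with φ(1)=1 and φ(xy)=φ(x)φ(y) whenever (x,y) ∈ Ω. If two words (x₁,…,xₘ) and (y₁,…,yₙ) over G are equivalent under the contraction/expansion equivalence, then φ(x₁)⋯φ(xₘ) = φ(y₁)⋯φ(yₙ) in L. -/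
open NeatLocalGroup in
/-- If `φ : G → L` preserves the identity and defined products, then
equivalent words have equal products of `φ`-images in `L`. -/
theorem prod_map_eq_of_word_equiv {G L : Type*} [NeatLocalGroup G] [Group L]
    (φ : G → L) (hone : φ (one : G) = 1)
    (hmul : ∀ a b : G, defined a b → φ (mul a b) = φ a * φ b)
    (x y : List G) (h : Relation.EqvGen Step x y) :
    (x.map φ).prod = (y.map φ).prod := by
  have hinv : ∀ a : G, φ (inv a) = (φ a)⁻¹ := by
    intro a
    have := hmul a (inv a) (defined_inv_right a)
    rw [NeatLocalGroup.mul_inv_cancel, hone] at this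
    exact eq_inv_of_mul_eq_one_right this.symm
  induction h with
  | rel x y hxy =>
      cases hxy with
      | contr1 u v a b h =>
          simp [hmul a b h, _root_.mul_assoc]
      | contr2 u v a =>
          simp [hinv a, _root_.mul_assoc]
  | refl => rfl
  | symm _ _ _ ih => exact ih.symm
  | trans _ _ _ _ _ ih1 ih2 => exact ih1.trans ih2
end
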